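/- Fix i with 2 ≤ i ≤ n. Let v = s_2 ∘ s_3 ∘ ⋯ ∘ s_n ∘ s_1 ∘ s_2 ∘ ⋯ ∘ s_{n−1} (rightmost factor applied first), let u be an element of the subgroup of the orthogonal group of ℝ^n generated by {s_j : j ≠ 2} with u(α_j) a negative root for every j ≠ 2, and let u_i be an element of the subgroup generated by {s_j : j ∉ {2, i}} with u_i(α_j) a negative root for every j ∉ {2, i} (u and u_i are the longest elements of the corresponding parabolic Weyl groups). Set w_i = u_i ∘ u ∘ v. Then w_i⁻¹(α_i) is a negative root, and w_i⁻¹(α_j) is a positive root for every 1 ≤ j ≤ n with j ≠ i. -/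

import Mathlib

open scoped InnerProductSpace

private lemma sRefl_invol {V : Type*} [NormedAddCommGroup V] [InnerProductSpace ℝ V]
    (b x : V) :
    (x - (2 * ⟪x, b⟫_ℝ / ⟪b, b⟫_ℝ) • b) -
      (2 * ⟪x - (2 * ⟪x, b⟫_ℝ / ⟪b, b⟫_ℝ) • b, b⟫_ℝ / ⟪b, b⟫_ℝ) • b = x := by
  by_cases hb : b = 0
  · simp [hb]
  · have h : ⟪b, b⟫_ℝ ≠ 0 := fun h => hb (inner_self_eq_zero.mp h)
    have key : 2 * ⟪x - (2 * ⟪x, b⟫_ℝ / ⟪b, b⟫_ℝ) • b, b⟫_ℝ / ⟪b, b⟫_ℝ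
        = -(2 * ⟪x, b⟫_ℝ / ⟪b, b⟫_ℝ) := by
      rw [inner_sub_left, real_inner_smul_left]
      field_simp
      ring
    rw [key, neg_smul, sub_neg_eq_add, sub_add_cancel]

/-- The reflection `s_b : x ↦ x - (2⟪x,b⟫/⟪b,b⟫) • b`, as a permutation of `V`. -/
noncomputable def sRefl {V : Type*} [NormedAddCommGroup V] [InnerProductSpace ℝ V]
    (b : V) : Equiv.Perm V where
  toFun x := x - (2 * ⟪x, b⟫_ℝ / ⟪b, b⟫_ℝ) • b
  invFun x := x - (2 * ⟪x, b⟫_ℝ / ⟪b, b⟫_ℝ) • b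
  left_inv x := sRefl_invol b x
  right_inv x := sRefl_invol b x

/-- `E n i` is the `i`-th standard basis vector of `ℝ^n` (for indices `1 ≤ i ≤ n`). -/
noncomputable def E (n i : ℕ) : EuclideanSpace ℝ (Fin n) :=
  if h : 1 ≤ i ∧ i ≤ n then EuclideanSpace.single (⟨i - 1, by omega⟩ : Fin n) 1 else 0

/-- The simple roots of type `Bₙ` (indexed by `1 ≤ i ≤ n`):
`αᵢ = eᵢ - eᵢ₊₁` for `i ≤ n - 1` and `αₙ = eₙ`. -/
noncomputable def alphaB (n i : ℕ) : EuclideanSpace ℝ (Fin n) :=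
  if i = n then E n n else E n i - E n (i + 1)

/-- The roots of type `Bₙ`: `±eᵢ ± eⱼ` (`1 ≤ i < j ≤ n`) and `±eᵢ` (`1 ≤ i ≤ n`). -/
def RootB (n : ℕ) : Set (EuclideanSpace ℝ (Fin n)) :=
  {x | (∃ i j, 1 ≤ i ∧ i < j ∧ j ≤ n ∧
      (x = E n i + E n j ∨ x = -(E n i + E n j) ∨ x = E n i - E n j ∨ x = E n j - E n i)) ∨
    (∃ i, 1 ≤ i ∧ i ≤ n ∧ (x = E n i ∨ x = -E n i))}

/-- A positive root of type `Bₙ`: a root which is a nonnegative integer combination of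
the simple roots. -/
def IsPosB (n : ℕ) (x : EuclideanSpace ℝ (Fin n)) : Prop :=
  x ∈ RootB n ∧ ∃ c : ℕ → ℕ, x = ∑ i ∈ Finset.Icc 1 n, (c i : ℝ) • alphaB n i

/-- A negative root of type `Bₙ`: the negative of a positive root. -/
def IsNegB (n : ℕ) (x : EuclideanSpace ℝ (Fin n)) : Prop :=
  IsPosB n (-x)

/-- The simple reflections `sᵢ = s_{αᵢ}` of type `Bₙ`. -/
noncomputable def sB (n i : ℕ) : Equiv.Perm (EuclideanSpace ℝ (Fin n)) :=
  sRefl (alphaB n i)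

/-- `v = s₂ ∘ s₃ ∘ ⋯ ∘ sₙ ∘ s₁ ∘ s₂ ∘ ⋯ ∘ sₙ₋₁` (rightmost factor applied first);
recall that in `Equiv.Perm` the product `f * g` is the composition `f ∘ g`. -/
noncomputable def vB (n : ℕ) : Equiv.Perm (EuclideanSpace ℝ (Fin n)) :=
  (((List.range (n - 1)).map fun k => sB n (k + 2)) ++
    ((List.range (n - 1)).map fun k => sB n (k + 1))).prod


section Stmt10Aux

variable {n : ℕ}

private lemma sRefl_apply {V : Type*} [NormedAddCommGroup V] [InnerProductSpace ℝ V]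
    (b x : V) : sRefl b x = x - (2 * ⟪x, b⟫_ℝ / ⟪b, b⟫_ℝ) • b := rfl

private lemma sRefl_inv {V : Type*} [NormedAddCommGroup V] [InnerProductSpace ℝ V]
    (b : V) : (sRefl b : Equiv.Perm V)⁻¹ = sRefl b := by
  apply Equiv.ext; intro x; rfl

private lemma E_apply (i : ℕ) (h1 : 1 ≤ i) (h2 : i ≤ n) (j : Fin n) :
    E n i j = if (j : ℕ) + 1 = i then 1 else 0 := by
  rw [E, dif_pos ⟨h1, h2⟩, EuclideanSpace.single_apply]
  by_cases h : (j : ℕ) + 1 = i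
  · have he : j = (⟨i - 1, by omega⟩ : Fin n) := Fin.ext (show (j : ℕ) = i - 1 by omega)
    rw [if_pos he, if_pos h]
  · have he : j ≠ (⟨i - 1, by omega⟩ : Fin n) := by
      intro hc
      have hv : (j : ℕ) = i - 1 := congrArg Fin.val hc
      omega
    rw [if_neg he, if_neg h]

private lemma E_ne {a b : ℕ} (ha1 : 1 ≤ a) (ha2 : a ≤ n) (hb1 : 1 ≤ b) (hb2 : b ≤ n)
    (hab : a ≠ b) : E n a ≠ E n b := by
  intro hc
  have h2 : E n a ⟨a - 1, by omega⟩ = E n b ⟨a - 1, by omega⟩ := by rw [hc]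
  rw [E_apply a ha1 ha2, E_apply b hb1 hb2] at h2
  have hv : ((⟨a - 1, by omega⟩ : Fin n) : ℕ) = a - 1 := rfl
  rw [hv, if_pos (by omega), if_neg (by omega)] at h2
  exact one_ne_zero h2

private lemma alphaB_lt {j : ℕ} (hj : j < n) : alphaB n j = E n j - E n (j + 1) :=
  if_neg (by omega)

private lemma alphaB_last : alphaB n n = E n n := if_pos rfl

/-- The partial-sum coordinate functional `x ↦ x₁ + ⋯ + x_k`. -/
private noncomputable def Fl (n k : ℕ) : EuclideanSpace ℝ (Fin n) →ₗ[ℝ] ℝ where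
  toFun x := ∑ j : Fin n, if (j : ℕ) + 1 ≤ k then x j else 0
  map_add' x y := by
    rw [← Finset.sum_add_distrib]
    refine Finset.sum_congr rfl fun j _ => ?_
    rw [PiLp.add_apply]
    split <;> simp
  map_smul' c x := by
    simp only [RingHom.id_apply, smul_eq_mul, Finset.mul_sum]
    refine Finset.sum_congr rfl fun j _ => ?_
    rw [PiLp.smul_apply]
    split <;> simp

private lemma Fl_E (k a : ℕ) (h1 : 1 ≤ a) (h2 : a ≤ n) :
    Fl n k (E n a) = if a ≤ k then 1 else 0 := by
  have hmem : (⟨a - 1, by omega⟩ : Fin n) ∈ Finset.univ := Finset.mem_univ _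
  show (∑ j : Fin n, if (j : ℕ) + 1 ≤ k then E n a j else 0) = _
  rw [Finset.sum_eq_single (⟨a - 1, by omega⟩ : Fin n)]
  · rw [E_apply a h1 h2]
    have hv : ((⟨a - 1, by omega⟩ : Fin n) : ℕ) = a - 1 := rfl
    rw [hv]
    rw [if_pos (by omega : a - 1 + 1 = a)]
    by_cases h : a ≤ k
    · rw [if_pos (by omega : a - 1 + 1 ≤ k), if_pos h]
    · rw [if_neg (by omega : ¬a - 1 + 1 ≤ k), if_neg h]
  · intro j _ hj
    have hne : ¬((j : ℕ) + 1 = a) := by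
      intro hc; exact hj (Fin.ext (show (j : ℕ) = a - 1 by omega))
    rw [E_apply a h1 h2, if_neg hne]
    split <;> rfl
  · intro h; exact absurd hmem h

private lemma Fl_alpha (k j : ℕ) (hk1 : 1 ≤ k) (hk2 : k ≤ n) (hj1 : 1 ≤ j) (hj2 : j ≤ n) :
    Fl n k (alphaB n j) = if j = k then 1 else 0 := by
  by_cases hj : j = n
  · rw [hj, alphaB_last, Fl_E k n (by omega) le_rfl]
    by_cases h : n ≤ k
    · rw [if_pos h, if_pos (by omega)]
    · rw [if_neg h, if_neg (by omega)]
  · rw [alphaB_lt (by omega), map_sub, Fl_E k j hj1 (by omega),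
      Fl_E k (j+1) (by omega) (by omega)]
    by_cases h1 : j ≤ k <;> by_cases h2 : j + 1 ≤ k
    · rw [if_pos h1, if_pos h2, if_neg (by omega)]; ring
    · rw [if_pos h1, if_neg h2, if_pos (by omega)]; ring
    · omega
    · rw [if_neg h1, if_neg h2, if_neg (by omega)]; ring

private lemma pos_Fl {x : EuclideanSpace ℝ (Fin n)} (h : IsPosB n x)
    (k : ℕ) (hk1 : 1 ≤ k) (hk2 : k ≤ n) : 0 ≤ Fl n k x := by
  obtain ⟨-, c, rfl⟩ := h
  rw [map_sum]
  have hterm : ∀ j ∈ Finset.Icc 1 n,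
      Fl n k ((c j : ℝ) • alphaB n j) = if j = k then (c j : ℝ) else 0 := by
    intro j hj
    obtain ⟨hj1, hj2⟩ := Finset.mem_Icc.mp hj
    rw [map_smul, Fl_alpha k j hk1 hk2 hj1 hj2, smul_eq_mul]
    split <;> simp
  rw [Finset.sum_congr rfl hterm, Finset.sum_ite_eq' (Finset.Icc 1 n) k (fun i => (c i : ℝ))]
  split
  · positivity
  · exact le_refl 0

private lemma neg_Fl {x : EuclideanSpace ℝ (Fin n)} (h : IsNegB n x)
    (k : ℕ) (hk1 : 1 ≤ k) (hk2 : k ≤ n) : Fl n k x ≤ 0 := by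
  have h2 := pos_Fl h k hk1 hk2
  rw [map_neg] at h2
  linarith

/-- Linearity of a permutation of `ℝ^n`. -/
private def Lp {m : ℕ} (f : Equiv.Perm (EuclideanSpace ℝ (Fin m))) : Prop :=
  (∀ x y, f (x + y) = f x + f y) ∧ ∀ (c : ℝ) x, f (c • x) = c • f x

private lemma Lp.neg' {f : Equiv.Perm (EuclideanSpace ℝ (Fin n))} (hf : Lp f)
    (x : EuclideanSpace ℝ (Fin n)) : f (-x) = -f x := by
  have := hf.2 (-1) x
  simpa [neg_smul, one_smul] using this

private lemma Lp.sub' {f : Equiv.Perm (EuclideanSpace ℝ (Fin n))} (hf : Lp f)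
    (x y : EuclideanSpace ℝ (Fin n)) : f (x - y) = f x - f y := by
  rw [sub_eq_add_neg, hf.1, hf.neg', sub_eq_add_neg]

private lemma Lp_one : Lp (1 : Equiv.Perm (EuclideanSpace ℝ (Fin n))) :=
  ⟨fun _ _ => rfl, fun _ _ => rfl⟩

private lemma Lp_mul {f g : Equiv.Perm (EuclideanSpace ℝ (Fin n))} (hf : Lp f) (hg : Lp g) :
    Lp (f * g) := by
  constructor
  · intro x y
    rw [Equiv.Perm.mul_apply, Equiv.Perm.mul_apply, Equiv.Perm.mul_apply, hg.1, hf.1]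
  · intro c x
    rw [Equiv.Perm.mul_apply, Equiv.Perm.mul_apply, hg.2, hf.2]

private lemma Lp_inv {f : Equiv.Perm (EuclideanSpace ℝ (Fin n))} (hf : Lp f) : Lp f⁻¹ := by
  constructor
  · intro x y
    apply f.injective
    rw [show f (f⁻¹ (x + y)) = x + y from f.apply_symm_apply _, hf.1,
      (show ∀ z, f (f⁻¹ z) = z from f.apply_symm_apply), (show ∀ z, f (f⁻¹ z) = z from f.apply_symm_apply)]
  · intro c x
    apply f.injective
    rw [show f (f⁻¹ (c • x)) = c • x from f.apply_symm_apply _, hf.2, (show ∀ z, f (f⁻¹ z) = z from f.apply_symm_apply)]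

private lemma Lp_sRefl (b : EuclideanSpace ℝ (Fin n)) : Lp (sRefl b) := by
  constructor
  · intro x y
    rw [sRefl_apply, sRefl_apply, sRefl_apply, inner_add_left,
      show 2 * (⟪x, b⟫_ℝ + ⟪y, b⟫_ℝ) / ⟪b, b⟫_ℝ
        = 2 * ⟪x, b⟫_ℝ / ⟪b, b⟫_ℝ + 2 * ⟪y, b⟫_ℝ / ⟪b, b⟫_ℝ by ring, add_smul]
    abel
  · intro c x
    rw [sRefl_apply, sRefl_apply, real_inner_smul_left,
      show 2 * (c * ⟪x, b⟫_ℝ) / ⟪b, b⟫_ℝ = c * (2 * ⟪x, b⟫_ℝ / ⟪b, b⟫_ℝ) by ring,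
      smul_sub, smul_smul]

private lemma Lp_sB (j : ℕ) : Lp (sB n j) := Lp_sRefl _

private lemma Lp_list (l : List (Equiv.Perm (EuclideanSpace ℝ (Fin n))))
    (h : ∀ f ∈ l, Lp f) : Lp l.prod := by
  induction l with
  | nil => exact Lp_one
  | cons a t ih =>
    rw [List.prod_cons]
    exact Lp_mul (h a List.mem_cons_self) (ih fun f hf => h f (List.mem_cons_of_mem a hf))

private lemma Lp_vB : Lp (vB n) := by
  apply Lp_list
  intro f hf
  rw [List.mem_append] at hf
  rcases hf with hf | hf <;> · obtain ⟨k, -, rfl⟩ := List.mem_map.mp hf; exact Lp_sB _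

private lemma sum_alpha_aux (d : ℕ) : ∀ a, 1 ≤ a → a ≤ n → n - a = d →
    ∑ j ∈ Finset.Ico a (n + 1), alphaB n j = E n a := by
  induction d with
  | zero =>
    intro a h1 h2 h3
    have ha : a = n := by omega
    rw [ha, Finset.Ico_add_one_right_eq_Icc, Finset.Icc_self, Finset.sum_singleton, alphaB_last]
  | succ d ih =>
    intro a h1 h2 h3
    have ha : a < n := by omega
    rw [← Finset.sum_Ico_consecutive _ (show a ≤ a + 1 by omega) (show a + 1 ≤ n + 1 by omega),
      Finset.Ico_add_one_right_eq_Icc, Finset.Icc_self, Finset.sum_singleton,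
      ih (a + 1) (by omega) (by omega) (by omega), alphaB_lt ha]
    abel

private lemma sum_alpha (a : ℕ) (h1 : 1 ≤ a) (h2 : a ≤ n) :
    ∑ j ∈ Finset.Ico a (n + 1), alphaB n j = E n a :=
  sum_alpha_aux (n - a) a h1 h2 rfl

private lemma sum_alpha_Ico (a b : ℕ) (h1 : 1 ≤ a) (hab : a ≤ b) (hb : b ≤ n) :
    ∑ j ∈ Finset.Ico a b, alphaB n j = E n a - E n b := by
  have h := Finset.sum_Ico_consecutive (fun j => alphaB n j) hab
    (show b ≤ n + 1 by omega)
  rw [sum_alpha a h1 (by omega), sum_alpha b (by omega) hb] at h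
  exact eq_sub_of_add_eq h

private lemma isPos_single (a : ℕ) (h1 : 1 ≤ a) (h2 : a ≤ n) : IsPosB n (E n a) := by
  refine ⟨Or.inr ⟨a, h1, h2, Or.inl rfl⟩, fun j => if a ≤ j then 1 else 0, ?_⟩
  rw [← Finset.Ico_add_one_right_eq_Icc,
    ← Finset.sum_Ico_consecutive _ (show 1 ≤ a by omega) (show a ≤ n + 1 by omega)]
  have e1 : ∑ j ∈ Finset.Ico 1 a,
      (((if a ≤ j then (1:ℕ) else 0) : ℕ) : ℝ) • alphaB n j = 0 :=
    Finset.sum_eq_zero fun j hj => by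
      rw [if_neg (by have := Finset.mem_Ico.mp hj; omega)]; simp
  have e2 : ∑ j ∈ Finset.Ico a (n+1),
      (((if a ≤ j then (1:ℕ) else 0) : ℕ) : ℝ) • alphaB n j
      = ∑ j ∈ Finset.Ico a (n+1), alphaB n j :=
    Finset.sum_congr rfl fun j hj => by
      rw [if_pos (Finset.mem_Ico.mp hj).1]; simp
  rw [e1, e2, zero_add, sum_alpha a h1 h2]

private lemma isPos_sub (a b : ℕ) (h1 : 1 ≤ a) (hab : a < b) (hb : b ≤ n) :
    IsPosB n (E n a - E n b) := by
  refine ⟨Or.inl ⟨a, b, h1, hab, hb, Or.inr (Or.inr (Or.inl rfl))⟩,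
    fun j => if a ≤ j ∧ j < b then 1 else 0, ?_⟩
  rw [← Finset.Ico_add_one_right_eq_Icc,
    ← Finset.sum_Ico_consecutive _ (show 1 ≤ a by omega) (show a ≤ n + 1 by omega),
    ← Finset.sum_Ico_consecutive _ (show a ≤ b by omega) (show b ≤ n + 1 by omega)]
  have e1 : ∑ j ∈ Finset.Ico 1 a,
      (((if a ≤ j ∧ j < b then (1:ℕ) else 0) : ℕ) : ℝ) • alphaB n j = 0 :=
    Finset.sum_eq_zero fun j hj => by
      rw [if_neg (by have := Finset.mem_Ico.mp hj; omega)]; simp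
  have e2 : ∑ j ∈ Finset.Ico a b,
      (((if a ≤ j ∧ j < b then (1:ℕ) else 0) : ℕ) : ℝ) • alphaB n j
      = ∑ j ∈ Finset.Ico a b, alphaB n j :=
    Finset.sum_congr rfl fun j hj => by
      rw [if_pos (by have := Finset.mem_Ico.mp hj; omega)]; simp
  have e3 : ∑ j ∈ Finset.Ico b (n+1),
      (((if a ≤ j ∧ j < b then (1:ℕ) else 0) : ℕ) : ℝ) • alphaB n j = 0 :=
    Finset.sum_eq_zero fun j hj => by
      rw [if_neg (by have := Finset.mem_Ico.mp hj; omega)]; simp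
  rw [e1, e2, e3, zero_add, add_zero, sum_alpha_Ico a b h1 (by omega) hb]

private lemma isPos_add (a b : ℕ) (h1 : 1 ≤ a) (hab : a < b) (hb : b ≤ n) :
    IsPosB n (E n a + E n b) := by
  refine ⟨Or.inl ⟨a, b, h1, hab, hb, Or.inl rfl⟩,
    fun j => if a ≤ j ∧ j < b then 1 else if b ≤ j then 2 else 0, ?_⟩
  rw [← Finset.Ico_add_one_right_eq_Icc,
    ← Finset.sum_Ico_consecutive _ (show 1 ≤ a by omega) (show a ≤ n + 1 by omega),
    ← Finset.sum_Ico_consecutive _ (show a ≤ b by omega) (show b ≤ n + 1 by omega)]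
  have e1 : ∑ j ∈ Finset.Ico 1 a,
      (((if a ≤ j ∧ j < b then (1:ℕ) else if b ≤ j then 2 else 0) : ℕ) : ℝ) • alphaB n j = 0 :=
    Finset.sum_eq_zero fun j hj => by
      rw [if_neg (by have := Finset.mem_Ico.mp hj; omega),
        if_neg (by have := Finset.mem_Ico.mp hj; omega)]; simp
  have e2 : ∑ j ∈ Finset.Ico a b,
      (((if a ≤ j ∧ j < b then (1:ℕ) else if b ≤ j then 2 else 0) : ℕ) : ℝ) • alphaB n j
      = ∑ j ∈ Finset.Ico a b, alphaB n j :=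
    Finset.sum_congr rfl fun j hj => by
      rw [if_pos (by have := Finset.mem_Ico.mp hj; omega)]; simp
  have e3 : ∑ j ∈ Finset.Ico b (n+1),
      (((if a ≤ j ∧ j < b then (1:ℕ) else if b ≤ j then 2 else 0) : ℕ) : ℝ) • alphaB n j
      = ∑ j ∈ Finset.Ico b (n+1), (2:ℝ) • alphaB n j :=
    Finset.sum_congr rfl fun j hj => by
      rw [if_neg (by have := Finset.mem_Ico.mp hj; omega),
        if_pos (Finset.mem_Ico.mp hj).1]; norm_num
  rw [e1, e2, e3, zero_add, ← Finset.smul_sum, sum_alpha_Ico a b h1 (by omega) hb,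
    sum_alpha b (by omega) hb]
  rw [two_smul]
  abel

private lemma isNeg_of_isPos {x : EuclideanSpace ℝ (Fin n)} (h : IsPosB n x) :
    IsNegB n (-x) := by
  rw [IsNegB, neg_neg]; exact h

private lemma inner_E (a b : ℕ) (ha1 : 1 ≤ a) (ha2 : a ≤ n) (hb1 : 1 ≤ b) (hb2 : b ≤ n) :
    ⟪E n a, E n b⟫_ℝ = if a = b then 1 else 0 := by
  rw [E, dif_pos ⟨ha1, ha2⟩, E, dif_pos ⟨hb1, hb2⟩, EuclideanSpace.inner_single_left,
    EuclideanSpace.single_apply]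
  simp only [map_one, one_mul]
  by_cases h : a = b
  · rw [if_pos (by subst h; rfl), if_pos h]
  · have : (⟨a - 1, by omega⟩ : Fin n) ≠ ⟨b - 1, by omega⟩ := by
      intro hc
      have hv : a - 1 = b - 1 := congrArg Fin.val hc
      omega
    rw [if_neg this, if_neg h]

private lemma sB_apply_lt (j k : ℕ) (hj1 : 1 ≤ j) (hjn : j < n) (hk1 : 1 ≤ k) (hk2 : k ≤ n) :
    sB n j (E n k) = if k = j then E n (j + 1) else if k = j + 1 then E n j else E n k := by
  rw [sB, sRefl_apply, alphaB_lt hjn]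
  have hnorm : ⟪E n j - E n (j + 1), E n j - E n (j + 1)⟫_ℝ = 2 := by
    rw [inner_sub_left, inner_sub_right, inner_sub_right,
      inner_E j j hj1 (by omega) hj1 (by omega),
      inner_E j (j+1) hj1 (by omega) (by omega) (by omega),
      inner_E (j+1) j (by omega) (by omega) hj1 (by omega),
      inner_E (j+1) (j+1) (by omega) (by omega) (by omega) (by omega),
      if_pos rfl, if_neg (by omega), if_neg (by omega), if_pos rfl]
    norm_num
  have hx : ⟪E n k, E n j - E n (j + 1)⟫_ℝ
      = (if k = j then (1:ℝ) else 0) - (if k = j + 1 then (1:ℝ) else 0) := by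
    rw [inner_sub_right, inner_E k j hk1 hk2 hj1 (by omega),
      inner_E k (j+1) hk1 hk2 (by omega) (by omega)]
  rw [hnorm, hx]
  by_cases h1 : k = j
  · rw [if_pos h1, if_pos h1, if_neg (by omega)]
    norm_num
    rw [h1]
    module
  · rw [if_neg h1, if_neg h1]
    by_cases h2 : k = j + 1
    · rw [if_pos h2, if_pos h2]
      norm_num
      rw [h2]
      module
    · rw [if_neg h2, if_neg h2]
      norm_num

private lemma sB_apply_n (k : ℕ) (hk1 : 1 ≤ k) (hk2 : k ≤ n) (hn1 : 1 ≤ n) :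
    sB n n (E n k) = if k = n then -E n n else E n k := by
  rw [sB, sRefl_apply, alphaB_last,
    inner_E n n hn1 le_rfl hn1 le_rfl, if_pos rfl,
    inner_E k n hk1 hk2 hn1 le_rfl]
  by_cases h : k = n
  · rw [if_pos h, if_pos h]
    norm_num
    rw [h]
    module
  · rw [if_neg h, if_neg h]
    norm_num

/-- Block invariant for elements of the parabolic subgroup avoiding `s₂` and `s_p`. -/
private def Pb (n p : ℕ) (f : Equiv.Perm (EuclideanSpace ℝ (Fin n))) : Prop :=
  (f (E n 1) = E n 1 ∨ f (E n 1) = E n 2) ∧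
  (f (E n 2) = E n 1 ∨ f (E n 2) = E n 2) ∧
  (∀ k, 3 ≤ k → k ≤ p → ∃ l, 3 ≤ l ∧ l ≤ p ∧ f (E n k) = E n l) ∧
  (∀ k, p < k → k ≤ n → ∃ l, p < l ∧ l ≤ n ∧ (f (E n k) = E n l ∨ f (E n k) = -E n l))

private def Good (n p : ℕ) (f : Equiv.Perm (EuclideanSpace ℝ (Fin n))) : Prop :=
  Lp f ∧ Pb n p f ∧ Pb n p f⁻¹

private lemma Pb_sB (p j : ℕ) (hp1 : 2 ≤ p) (hp2 : p ≤ n) (hj1 : 1 ≤ j) (hjn : j ≤ n)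
    (hj2 : j ≠ 2) (hjp : j ≠ p) : Pb n p (sB n j) := by
  by_cases hjlt : j < n
  · refine ⟨?_, ?_, ?_, ?_⟩
    · rw [sB_apply_lt j 1 hj1 hjlt (by omega) (by omega)]
      by_cases h : 1 = j
      · rw [if_pos h]; right; rw [show j + 1 = 2 by omega]
      · rw [if_neg h, if_neg (by omega)]; left; rfl
    · rw [sB_apply_lt j 2 hj1 hjlt (by omega) (by omega), if_neg (by omega)]
      by_cases h : 2 = j + 1
      · rw [if_pos h]; left; rw [show j = 1 by omega]
      · rw [if_neg h]; right; rfl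
    · intro k hk3 hkp
      rw [sB_apply_lt j k hj1 hjlt (by omega) (by omega)]
      by_cases h1 : k = j
      · rw [if_pos h1]; exact ⟨j + 1, by omega, by omega, rfl⟩
      · rw [if_neg h1]
        by_cases h2 : k = j + 1
        · rw [if_pos h2]; exact ⟨j, by omega, by omega, rfl⟩
        · rw [if_neg h2]; exact ⟨k, hk3, hkp, rfl⟩
    · intro k hkp hkn
      rw [sB_apply_lt j k hj1 hjlt (by omega) hkn]
      by_cases h1 : k = j
      · rw [if_pos h1]; exact ⟨j + 1, by omega, by omega, Or.inl rfl⟩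
      · rw [if_neg h1]
        by_cases h2 : k = j + 1
        · rw [if_pos h2]; exact ⟨j, by omega, by omega, Or.inl rfl⟩
        · rw [if_neg h2]; exact ⟨k, hkp, hkn, Or.inl rfl⟩
  · have hj : j = n := by omega
    subst hj
    refine ⟨?_, ?_, ?_, ?_⟩
    · rw [sB_apply_n 1 (by omega) (by omega) (by omega), if_neg (by omega)]; left; rfl
    · rw [sB_apply_n 2 (by omega) (by omega) (by omega), if_neg (by omega)]; right; rfl
    · intro k hk3 hkp
      rw [sB_apply_n k (by omega) (by omega) (by omega), if_neg (by omega)]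
      exact ⟨k, hk3, hkp, rfl⟩
    · intro k hkp hkn
      rw [sB_apply_n k (by omega) hkn (by omega)]
      by_cases h : k = j
      · rw [if_pos h]; exact ⟨j, by omega, le_rfl, Or.inr rfl⟩
      · rw [if_neg h]; exact ⟨k, hkp, hkn, Or.inl rfl⟩

private lemma Pb_comp {p : ℕ} {f g : Equiv.Perm (EuclideanSpace ℝ (Fin n))}
    (hfl : Lp f) (hf : Pb n p f) (hg : Pb n p g) : Pb n p (f * g) := by
  obtain ⟨hf1, hf2, hf3, hf4⟩ := hf
  obtain ⟨hg1, hg2, hg3, hg4⟩ := hg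
  refine ⟨?_, ?_, ?_, ?_⟩
  · rw [Equiv.Perm.mul_apply]
    rcases hg1 with h | h <;> rw [h]
    · exact hf1
    · exact hf2
  · rw [Equiv.Perm.mul_apply]
    rcases hg2 with h | h <;> rw [h]
    · exact hf1
    · exact hf2
  · intro k hk3 hkp
    obtain ⟨l, hl3, hlp, hl⟩ := hg3 k hk3 hkp
    obtain ⟨m, hm3, hmp, hm⟩ := hf3 l hl3 hlp
    exact ⟨m, hm3, hmp, by rw [Equiv.Perm.mul_apply, hl, hm]⟩
  · intro k hkp hkn
    obtain ⟨l, hlp, hln, hl⟩ := hg4 k hkp hkn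
    obtain ⟨m, hmp, hmn, hm⟩ := hf4 l hlp hln
    rcases hl with hl | hl
    · exact ⟨m, hmp, hmn, by rw [Equiv.Perm.mul_apply, hl]; exact hm⟩
    · refine ⟨m, hmp, hmn, ?_⟩
      rw [Equiv.Perm.mul_apply, hl, hfl.neg']
      rcases hm with hm | hm <;> rw [hm]
      · right; rfl
      · left; rw [neg_neg]

private lemma sB_inv (j : ℕ) : (sB n j)⁻¹ = sB n j := sRefl_inv _

private lemma good_of_closure (p : ℕ) (hp1 : 2 ≤ p) (hp2 : p ≤ n)
    {f : Equiv.Perm (EuclideanSpace ℝ (Fin n))}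
    (hf : f ∈ Subgroup.closure {g | ∃ j, 1 ≤ j ∧ j ≤ n ∧ j ≠ 2 ∧ j ≠ p ∧ g = sB n j}) :
    Good n p f := by
  induction hf using Subgroup.closure_induction with
  | mem g hg =>
    obtain ⟨j, hj1, hjn, hj2, hjp, rfl⟩ := hg
    have hPb := Pb_sB p j hp1 hp2 hj1 hjn hj2 hjp
    exact ⟨Lp_sB j, hPb, by rw [sB_inv]; exact hPb⟩
  | one =>
    have hPb : Pb n p (1 : Equiv.Perm (EuclideanSpace ℝ (Fin n))) :=
      ⟨Or.inl rfl, Or.inr rfl, fun k h3 hp => ⟨k, h3, hp, rfl⟩,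
        fun k h1 h2 => ⟨k, h1, h2, Or.inl rfl⟩⟩
    exact ⟨Lp_one, hPb, by rw [inv_one]; exact hPb⟩
  | mul a b _ _ ha hb =>
    refine ⟨Lp_mul ha.1 hb.1, Pb_comp ha.1 ha.2.1 hb.2.1, ?_⟩
    rw [mul_inv_rev]
    exact Pb_comp (Lp_inv hb.1) hb.2.2 ha.2.2
  | inv a _ ha =>
    exact ⟨Lp_inv ha.1, ha.2.2, by rw [inv_inv]; exact ha.2.1⟩

private lemma mono_id (a b : ℕ) (σ : ℕ → ℕ)
    (hrange : ∀ k, a ≤ k → k ≤ b → a ≤ σ k ∧ σ k ≤ b)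
    (hmono : ∀ k, a ≤ k → k + 1 ≤ b → σ k < σ (k + 1)) :
    ∀ k, a ≤ k → k ≤ b → σ k = k := by
  have hlow : ∀ k (hak : a ≤ k), k ≤ b → k ≤ σ k := by
    intro k hak
    induction k, hak using Nat.le_induction with
    | base => intro h; exact (hrange a le_rfl h).1
    | succ k hk ih =>
      intro h
      have h1 := hmono k hk (by omega)
      have h2 := ih (by omega)
      omega
  have hupp : ∀ d k, a ≤ k → k ≤ b → b - k = d → σ k ≤ k := by
    intro d
    induction d with
    | zero =>
      intro k h1 h2 h3
      have : k = b := by omega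
      have := (hrange k h1 h2).2
      omega
    | succ d ih =>
      intro k h1 h2 h3
      have h4 := hmono k h1 (by omega)
      have h5 := ih (k + 1) (by omega) (by omega) (by omega)
      omega
  intro k h1 h2
  have := hlow k h1 h2
  have := hupp (b - k) k h1 h2 rfl
  omega

private lemma keyU (p : ℕ) (hp1 : 2 ≤ p) (hp2 : p ≤ n) (hn : 2 ≤ n)
    {u : Equiv.Perm (EuclideanSpace ℝ (Fin n))} (hg : Good n p u)
    (hneg : ∀ j, 1 ≤ j → j ≤ n → j ≠ 2 → j ≠ p → IsNegB n (u (alphaB n j))) :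
    u (E n 1) = E n 2 ∧ u (E n 2) = E n 1 ∧
    (∀ k, 3 ≤ k → k ≤ p → u (E n k) = E n (p + 3 - k)) ∧
    (∀ k, p < k → k ≤ n → u (E n k) = -E n k) := by
  obtain ⟨hLp, ⟨h1, h2, h3, h4⟩, -⟩ := hg
  have hne12 : E n 1 ≠ E n 2 := E_ne (by omega) (by omega) (by omega) (by omega) (by omega)
  have huinj := u.injective
  have e12 : u (E n 1) = E n 2 ∧ u (E n 2) = E n 1 := by
    rcases h1 with ha | ha
    · exfalso
      have hb : u (E n 2) = E n 2 := by
        rcases h2 with hb | hb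
        · exact absurd (huinj (ha.trans hb.symm)) hne12
        · exact hb
      have hα := hneg 1 (by omega) (by omega) (by omega) (by omega)
      rw [alphaB_lt (by omega : 1 < n), hLp.sub', ha, hb] at hα
      have hF := neg_Fl hα 1 (by omega) (by omega)
      rw [map_sub, Fl_E 1 1 (by omega) (by omega), Fl_E 1 2 (by omega) (by omega),
        if_pos le_rfl, if_neg (by omega)] at hF
      linarith
    · refine ⟨ha, ?_⟩
      rcases h2 with hb | hb
      · exact hb
      · exact absurd (huinj (ha.trans hb.symm)) hne12
  have h3' : ∀ k, ∃ l, 3 ≤ k → k ≤ p → 3 ≤ l ∧ l ≤ p ∧ u (E n k) = E n l := by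
    intro k
    by_cases h : 3 ≤ k ∧ k ≤ p
    · obtain ⟨l, hl⟩ := h3 k h.1 h.2
      exact ⟨l, fun _ _ => hl⟩
    · exact ⟨0, fun h1 h2 => absurd ⟨h1, h2⟩ h⟩
  obtain ⟨σ, hσ⟩ := Classical.axiomOfChoice h3'
  have hdec : ∀ k, 3 ≤ k → k + 1 ≤ p → σ (k + 1) < σ k := by
    intro k hk3 hkp
    obtain ⟨ha1, ha2, ha3⟩ := hσ k hk3 (by omega)
    obtain ⟨hb1, hb2, hb3⟩ := hσ (k + 1) (by omega) hkp
    have hα := hneg k (by omega) (by omega) (by omega) (by omega)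
    rw [alphaB_lt (by omega : k < n), hLp.sub', ha3, hb3] at hα
    have hF := neg_Fl hα (σ k) (by omega) (by omega)
    rw [map_sub, Fl_E _ _ (by omega) (by omega), Fl_E _ _ (by omega) (by omega),
      if_pos le_rfl] at hF
    have hle : σ (k + 1) ≤ σ k := by
      by_contra hc
      rw [if_neg (by omega)] at hF
      linarith
    have hne : σ (k + 1) ≠ σ k := by
      intro he
      have heq : u (E n k) = u (E n (k + 1)) := by rw [ha3, hb3, he]
      exact E_ne (show 1 ≤ k by omega) (by omega) (by omega) (by omega) (by omega) (huinj heq)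
    omega
  have hmid : ∀ k, 3 ≤ k → k ≤ p → u (E n k) = E n (p + 3 - k) := by
    intro k hk3 hkp
    have hτ := mono_id 3 p (fun k => p + 3 - σ k)
      (fun k hk1 hk2 => by
        obtain ⟨ha1, ha2, -⟩ := hσ k hk1 hk2
        show 3 ≤ p + 3 - σ k ∧ p + 3 - σ k ≤ p
        omega)
      (fun k hk1 hk2 => by
        have hd := hdec k hk1 hk2
        obtain ⟨ha1, ha2, -⟩ := hσ k hk1 (by omega)
        obtain ⟨hb1, hb2, -⟩ := hσ (k + 1) (by omega) hk2
        show p + 3 - σ k < p + 3 - σ (k + 1)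
        omega)
      k hk3 hkp
    obtain ⟨ha1, ha2, ha3⟩ := hσ k hk3 hkp
    have hτ' : p + 3 - σ k = k := hτ
    have hσk : σ k = p + 3 - k := by omega
    rw [ha3, hσk]
  have h4' : ∀ k, ∃ l, p < k → k ≤ n →
      p < l ∧ l ≤ n ∧ (u (E n k) = E n l ∨ u (E n k) = -E n l) := by
    intro k
    by_cases h : p < k ∧ k ≤ n
    · obtain ⟨l, hl⟩ := h4 k h.1 h.2
      exact ⟨l, fun _ _ => hl⟩
    · exact ⟨0, fun h1 h2 => absurd ⟨h1, h2⟩ h⟩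
  obtain ⟨σ', hσ'⟩ := Classical.axiomOfChoice h4'
  have hsign : ∀ d k, p < k → k ≤ n → n - k = d → u (E n k) = -E n (σ' k) := by
    intro d
    induction d with
    | zero =>
      intro k hpk hkn hd
      obtain ⟨ha1, ha2, ha3⟩ := hσ' k hpk hkn
      rcases ha3 with hc | hc
      · exfalso
        have hα := hneg k (by omega) (by omega) (by omega) (by omega)
        have hk : alphaB n k = E n k := by rw [show k = n by omega, alphaB_last]
        rw [hk, hc] at hα
        have hF := neg_Fl hα (σ' k) (by omega) (by omega)
        rw [Fl_E _ _ (by omega) (by omega), if_pos le_rfl] at hF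
        linarith
      · exact hc
    | succ d ih =>
      intro k hpk hkn hd
      obtain ⟨ha1, ha2, ha3⟩ := hσ' k hpk hkn
      rcases ha3 with hc | hc
      · exfalso
        obtain ⟨hb1, hb2, -⟩ := hσ' (k + 1) (by omega) (by omega)
        have ih1 := ih (k + 1) (by omega) (by omega) (by omega)
        have hα := hneg k (by omega) (by omega) (by omega) (by omega)
        rw [alphaB_lt (by omega : k < n), hLp.sub', hc, ih1, sub_neg_eq_add] at hα
        have hF := neg_Fl hα n (by omega) le_rfl
        rw [map_add, Fl_E _ _ (by omega) (by omega), Fl_E _ _ (by omega) (by omega),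
          if_pos (by omega), if_pos (by omega)] at hF
        linarith
      · exact hc
  have hsgn : ∀ k, p < k → k ≤ n → u (E n k) = -E n (σ' k) :=
    fun k hh1 hh2 => hsign (n - k) k hh1 hh2 rfl
  have hinc : ∀ k, p + 1 ≤ k → k + 1 ≤ n → σ' k < σ' (k + 1) := by
    intro k hk1 hk2
    obtain ⟨ha1, ha2, -⟩ := hσ' k (by omega) (by omega)
    obtain ⟨hb1, hb2, -⟩ := hσ' (k + 1) (by omega) (by omega)
    have hα := hneg k (by omega) (by omega) (by omega) (by omega)
    rw [alphaB_lt (by omega : k < n), hLp.sub', hsgn k (by omega) (by omega),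
      hsgn (k + 1) (by omega) (by omega), neg_sub_neg] at hα
    have hF := neg_Fl hα (σ' (k + 1)) (by omega) (by omega)
    rw [map_sub, Fl_E _ _ (by omega) (by omega), Fl_E _ _ (by omega) (by omega),
      if_pos le_rfl] at hF
    have hle : σ' k ≤ σ' (k + 1) := by
      by_contra hc
      rw [if_neg (by omega)] at hF
      linarith
    have hne : σ' k ≠ σ' (k + 1) := by
      intro he
      have heq : u (E n k) = u (E n (k + 1)) := by
        rw [hsgn k (by omega) (by omega), hsgn (k + 1) (by omega) (by omega), he]
      exact E_ne (show 1 ≤ k by omega) (by omega) (by omega) (by omega) (by omega) (huinj heq)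
    omega
  refine ⟨e12.1, e12.2, hmid, ?_⟩
  intro k hpk hkn
  have hid := mono_id (p + 1) n σ'
    (fun k hk1 hk2 => by
      obtain ⟨ha1, ha2, -⟩ := hσ' k (by omega) hk2
      constructor <;> omega)
    hinc k (by omega) hkn
  rw [hsgn k hpk hkn, hid]

private lemma P_apply (m : ℕ) (hm : m ≤ n - 1) : ∀ k, 1 ≤ k → k ≤ n →
    (((List.range m).map fun j => sB n (j + 1)).prod) (E n k)
      = if k ≤ m then E n (k + 1) else if k = m + 1 then E n 1 else E n k := by
  induction m with
  | zero =>
    intro k hk1 hk2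
    rw [List.range_zero, List.map_nil, List.prod_nil, if_neg (by omega)]
    by_cases h : k = 1
    · rw [if_pos h, h]; rfl
    · rw [if_neg h]; rfl
  | succ m ih =>
    intro k hk1 hk2
    have hm' : m ≤ n - 1 := by omega
    rw [List.range_succ, List.map_append, List.prod_append, List.map_singleton,
      List.prod_singleton, Equiv.Perm.mul_apply,
      sB_apply_lt (m + 1) k (by omega) (by omega) hk1 hk2]
    by_cases h1 : k = m + 1
    · rw [if_pos h1, ih hm' (m + 2) (by omega) (by omega), if_neg (by omega),
        if_neg (by omega), if_pos (by omega), h1]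
    · rw [if_neg h1]
      by_cases h2 : k = m + 2
      · rw [if_pos h2, ih hm' (m + 1) (by omega) (by omega), if_neg (by omega),
          if_pos rfl, if_neg (by omega), if_pos (by omega)]
      · rw [if_neg h2, ih hm' k hk1 hk2]
        by_cases h3 : k ≤ m
        · rw [if_pos h3, if_pos (by omega)]
        · rw [if_neg h3, if_neg (by omega), if_neg (by omega), if_neg (by omega)]

private lemma Q_apply (m : ℕ) (hm : m ≤ n - 2) : ∀ k, 1 ≤ k → k ≤ n →
    (((List.range m).map fun j => sB n (j + 2)).prod) (E n k)
      = if 2 ≤ k ∧ k ≤ m + 1 then E n (k + 1) else if k = m + 2 then E n 2 else E n k := by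
  induction m with
  | zero =>
    intro k hk1 hk2
    rw [List.range_zero, List.map_nil, List.prod_nil, if_neg (by omega)]
    by_cases h : k = 2
    · rw [if_pos h, h]; rfl
    · rw [if_neg h]; rfl
  | succ m ih =>
    intro k hk1 hk2
    have hm' : m ≤ n - 2 := by omega
    rw [List.range_succ, List.map_append, List.prod_append, List.map_singleton,
      List.prod_singleton, Equiv.Perm.mul_apply,
      sB_apply_lt (m + 2) k (by omega) (by omega) hk1 hk2]
    by_cases h1 : k = m + 2
    · rw [if_pos h1, ih hm' (m + 3) (by omega) (by omega), if_neg (by omega),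
        if_neg (by omega), if_pos (by omega), h1]
    · rw [if_neg h1]
      by_cases h2 : k = m + 3
      · rw [if_pos h2, ih hm' (m + 2) (by omega) (by omega), if_neg (by omega),
          if_pos rfl, if_neg (by omega), if_pos (by omega)]
      · rw [if_neg h2, ih hm' k hk1 hk2]
        by_cases h3 : 2 ≤ k ∧ k ≤ m + 1
        · rw [if_pos h3, if_pos (by omega)]
        · rw [if_neg h3, if_neg (by omega), if_neg (by omega), if_neg (by omega)]

private lemma Q_full (hn : 2 ≤ n) : ∀ k, 1 ≤ k → k ≤ n →
    (((List.range (n - 1)).map fun j => sB n (j + 2)).prod) (E n k)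
      = if k = 1 then E n 1 else if k ≤ n - 1 then E n (k + 1) else -E n 2 := by
  have hsplit : List.range (n - 1) = List.range (n - 2) ++ [n - 2] := by
    rw [← List.range_succ]
    congr 1
    omega
  intro k hk1 hk2
  have hLpQ : Lp (((List.range (n - 2)).map fun j => sB n (j + 2)).prod) :=
    Lp_list _ (by
      intro f hf
      obtain ⟨j, -, rfl⟩ := List.mem_map.mp hf
      exact Lp_sB _)
  rw [hsplit, List.map_append, List.prod_append, List.map_singleton, List.prod_singleton,
    Equiv.Perm.mul_apply, show n - 2 + 2 = n by omega, sB_apply_n k hk1 hk2 (by omega)]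
  by_cases h : k = n
  · rw [if_pos h, hLpQ.neg', Q_apply (n - 2) le_rfl n (by omega) le_rfl,
      if_neg (by omega), if_pos (by omega), if_neg (by omega), if_neg (by omega)]
  · rw [if_neg h, Q_apply (n - 2) le_rfl k hk1 hk2]
    by_cases h1 : k = 1
    · rw [if_neg (by omega), if_neg (by omega), if_pos h1, h1]
    · rw [if_neg h1]
      have hkle : k ≤ n - 1 := by omega
      rw [if_pos (by omega : 2 ≤ k ∧ k ≤ n - 2 + 1), if_pos hkle]

private lemma vB_apply (hn : 2 ≤ n) (k : ℕ) (hk1 : 1 ≤ k) (hk2 : k ≤ n) :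
    vB n (E n k) = if k ≤ n - 2 then E n (k + 2)
      else if k = n - 1 then -E n 2 else E n 1 := by
  rw [vB, List.prod_append, Equiv.Perm.mul_apply, P_apply (n - 1) le_rfl k hk1 hk2]
  by_cases h1 : k ≤ n - 1
  · rw [if_pos h1, Q_full hn (k + 1) (by omega) (by omega), if_neg (by omega)]
    by_cases h2 : k ≤ n - 2
    · rw [if_pos (by omega : k + 1 ≤ n - 1), if_pos h2, show k + 1 + 1 = k + 2 by omega]
    · have hk : k = n - 1 := by omega
      rw [if_neg (by omega), if_neg h2, if_pos hk]
  · have hk : k = n := by omega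
    rw [if_neg (by omega), if_pos (by omega : k = n - 1 + 1),
      Q_full hn 1 le_rfl (by omega), if_pos rfl, if_neg (by omega), if_neg (by omega)]

end Stmt10Aux

/-- Type `Bₙ` (`n ≥ 2`), `2 ≤ i ≤ n`: let `v = s₂ ∘ ⋯ ∘ sₙ ∘ s₁ ∘ ⋯ ∘ sₙ₋₁`, let `u` be the
longest element of the parabolic Weyl group generated by `{sⱼ : j ≠ 2}` and let `u'` be the
longest element of the parabolic Weyl group generated by `{sⱼ : j ∉ {2, i}}`.  Then, for
`wᵢ = u' ∘ u ∘ v`, `wᵢ⁻¹(αᵢ)` is a negative root and `wᵢ⁻¹(αⱼ)` is a positive root for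
every `j ≠ i`. -/
theorem stmt_10 (n : ℕ) (hn : 2 ≤ n) (i : ℕ) (hi1 : 2 ≤ i) (hi2 : i ≤ n)
    (u : Equiv.Perm (EuclideanSpace ℝ (Fin n)))
    (hu : u ∈ Subgroup.closure {g | ∃ j, 1 ≤ j ∧ j ≤ n ∧ j ≠ 2 ∧ g = sB n j})
    (hneg : ∀ j, 1 ≤ j → j ≤ n → j ≠ 2 → IsNegB n (u (alphaB n j)))
    (u' : Equiv.Perm (EuclideanSpace ℝ (Fin n)))
    (hu' : u' ∈ Subgroup.closure {g | ∃ j, 1 ≤ j ∧ j ≤ n ∧ j ≠ 2 ∧ j ≠ i ∧ g = sB n j})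
    (hneg' : ∀ j, 1 ≤ j → j ≤ n → j ≠ 2 → j ≠ i → IsNegB n (u' (alphaB n j))) :
    IsNegB n ((u' * u * vB n)⁻¹ (alphaB n i)) ∧
    ∀ j, 1 ≤ j → j ≤ n → j ≠ i → IsPosB n ((u' * u * vB n)⁻¹ (alphaB n j)) := by
  have hsetu : ({g | ∃ j, 1 ≤ j ∧ j ≤ n ∧ j ≠ 2 ∧ g = sB n j} :
      Set (Equiv.Perm (EuclideanSpace ℝ (Fin n))))
      = {g | ∃ j, 1 ≤ j ∧ j ≤ n ∧ j ≠ 2 ∧ j ≠ 2 ∧ g = sB n j} := by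
    ext g
    constructor
    · rintro ⟨j, a, b, c, e⟩; exact ⟨j, a, b, c, c, e⟩
    · rintro ⟨j, a, b, c, -, e⟩; exact ⟨j, a, b, c, e⟩
  rw [hsetu] at hu
  have hgu := good_of_closure 2 le_rfl hn hu
  have hgu' := good_of_closure i hi1 hi2 hu'
  have hLu : Lp u := hgu.1
  have hLu' : Lp u' := hgu'.1
  obtain ⟨hu1, hu2, -, hu4⟩ := keyU 2 le_rfl hn hn hgu (fun j a b c _ => hneg j a b c)
  obtain ⟨hv1, hv2, hv3, hv4⟩ := keyU i hi1 hi2 hn hgu' hneg'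
  have hLv : Lp (vB n) := Lp_vB
  have hinv : ∀ (x T : EuclideanSpace ℝ (Fin n)), (u' * u * vB n) T = x →
      (u' * u * vB n)⁻¹ x = T := by
    intro x T h
    rw [← h]
    exact Equiv.symm_apply_apply _ _
  have master : ∀ j, 1 ≤ j → j ≤ n →
      (j = i → IsNegB n ((u' * u * vB n)⁻¹ (alphaB n j))) ∧
      (j ≠ i → IsPosB n ((u' * u * vB n)⁻¹ (alphaB n j))) := by
    intro j hj1 hjn
    by_cases hj1' : j = 1
    · -- case j = 1 : target E (n-1) + E n, positive
      subst hj1'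
      have hT : (u' * u * vB n)⁻¹ (alphaB n 1) = E n (n - 1) + E n n := by
        apply hinv
        rw [Equiv.Perm.mul_apply, Equiv.Perm.mul_apply, hLv.1,
          vB_apply hn (n - 1) (by omega) (by omega), vB_apply hn n (by omega) le_rfl,
          if_neg (by omega), if_pos rfl, if_neg (by omega), if_neg (by omega),
          hLu.1, hLu.neg', hu2, hu1, hLu'.1, hLu'.neg', hv1, hv2,
          alphaB_lt (by omega : 1 < n)]
        abel
      rw [hT]
      exact ⟨fun h => absurd h (by omega), fun _ =>
        isPos_add (n - 1) n (by omega) (by omega) le_rfl⟩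
    · by_cases hj2' : j = 2
      · subst hj2'
        by_cases hi2' : i = 2
        · by_cases hn2 : n = 2
          · -- case j = i = n = 2 : target -E 1, negative
            have hT : (u' * u * vB n)⁻¹ (alphaB n 2) = -E n 1 := by
              apply hinv
              have hαj : alphaB n 2 = E n 2 := by
                rw [show (2 : ℕ) = n by omega]
                exact alphaB_last
              rw [Equiv.Perm.mul_apply, Equiv.Perm.mul_apply, hLv.neg',
                vB_apply hn 1 (by omega) (by omega), if_neg (by omega), if_pos (by omega),
                neg_neg, hu2, hv1, hαj]
            rw [hT]
            exact ⟨fun _ => isNeg_of_isPos (isPos_single 1 (by omega) (by omega)),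
              fun h => absurd hi2'.symm h⟩
          · -- case j = i = 2, n ≥ 3 : target -(E 1 + E (n-1)), negative
            have hT : (u' * u * vB n)⁻¹ (alphaB n 2) = -(E n 1 + E n (n - 1)) := by
              apply hinv
              rw [Equiv.Perm.mul_apply, Equiv.Perm.mul_apply, hLv.neg', hLv.1,
                vB_apply hn 1 (by omega) (by omega), vB_apply hn (n - 1) (by omega) (by omega),
                if_pos (by omega), if_neg (by omega), if_pos rfl,
                show (1 : ℕ) + 2 = 3 by omega]
              rw [show -(E n 3 + -E n 2) = -E n 3 + E n 2 by abel, hLu.1, hLu.neg',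
                hu4 3 (by omega) (by omega), hu2, neg_neg, hLu'.1, hv4 3 (by omega) (by omega),
                hv1, alphaB_lt (by omega : 2 < n)]
              abel
            rw [hT]
            exact ⟨fun _ => isNeg_of_isPos (isPos_add 1 (n - 1) (by omega) (by omega) (by omega)),
              fun h => absurd hi2'.symm h⟩
        · -- case j = 2 < i : target E (i-2) - E (n-1), positive
          have hT : (u' * u * vB n)⁻¹ (alphaB n 2) = E n (i - 2) - E n (n - 1) := by
            apply hinv
            rw [Equiv.Perm.mul_apply, Equiv.Perm.mul_apply, hLv.sub',
              vB_apply hn (i - 2) (by omega) (by omega),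
              vB_apply hn (n - 1) (by omega) (by omega),
              if_pos (by omega), show i - 2 + 2 = i by omega,
              if_neg (by omega), if_pos rfl, sub_neg_eq_add,
              hLu.1, hu4 i (by omega) hi2, hu2, hLu'.1, hLu'.neg',
              hv3 i (by omega) le_rfl, show i + 3 - i = 3 by omega, hv1,
              alphaB_lt (by omega : 2 < n)]
            abel
          rw [hT]
          exact ⟨fun h => absurd h (by omega), fun _ =>
            isPos_sub (i - 2) (n - 1) (by omega) (by omega) (by omega)⟩
      · -- now 3 ≤ j
        by_cases hjn' : j = n
        · by_cases hin : i = n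
          · -- case j = i = n (n ≥ 3) : target -E 1, negative
            have hT : (u' * u * vB n)⁻¹ (alphaB n j) = -E n 1 := by
              apply hinv
              rw [Equiv.Perm.mul_apply, Equiv.Perm.mul_apply, hLv.neg',
                vB_apply hn 1 (by omega) (by omega), if_pos (by omega),
                show (1 : ℕ) + 2 = 3 by omega, hLu.neg', hu4 3 (by omega) (by omega),
                neg_neg, hv3 3 (by omega) (by omega), show i + 3 - 3 = i by omega,
                hin, hjn', alphaB_last]
            rw [hT]
            exact ⟨fun _ => isNeg_of_isPos (isPos_single 1 (by omega) (by omega)),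
              fun h => absurd (hjn'.trans hin.symm) h⟩
          · -- case j = n > i : target E (n-2), positive
            have hT : (u' * u * vB n)⁻¹ (alphaB n j) = E n (n - 2) := by
              apply hinv
              rw [Equiv.Perm.mul_apply, Equiv.Perm.mul_apply,
                vB_apply hn (n - 2) (by omega) (by omega), if_pos le_rfl,
                show n - 2 + 2 = n by omega, hu4 n (by omega) le_rfl,
                hLu'.neg', hv4 n (by omega) le_rfl, neg_neg, hjn', alphaB_last]
            rw [hT]
            exact ⟨fun h => absurd h (by omega), fun _ =>
              isPos_single (n - 2) (by omega) (by omega)⟩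
        · -- now 3 ≤ j ≤ n - 1
          by_cases hji : j = i
          · -- case j = i, 3 ≤ i ≤ n-1 : target -(E 1 + E (i-1)), negative
            subst hji
            have hT : (u' * u * vB n)⁻¹ (alphaB n j) = -(E n 1 + E n (j - 1)) := by
              apply hinv
              rw [Equiv.Perm.mul_apply, Equiv.Perm.mul_apply, hLv.neg', hLv.1,
                vB_apply hn 1 (by omega) (by omega),
                vB_apply hn (j - 1) (by omega) (by omega),
                if_pos (by omega), if_pos (by omega),
                show (1 : ℕ) + 2 = 3 by omega, show j - 1 + 2 = j + 1 by omega]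
              rw [show -(E n 3 + E n (j + 1)) = -E n 3 + -E n (j + 1) by abel,
                hLu.1, hLu.neg', hLu.neg', hu4 3 (by omega) (by omega),
                hu4 (j + 1) (by omega) (by omega), neg_neg, neg_neg,
                hLu'.1, hv3 3 (by omega) (by omega), show j + 3 - 3 = j by omega,
                hv4 (j + 1) (by omega) (by omega), alphaB_lt (by omega : j < n)]
              abel
            rw [hT]
            exact ⟨fun _ => isNeg_of_isPos (isPos_add 1 (j - 1) (by omega) (by omega) (by omega)),
              fun h => absurd rfl h⟩
          · by_cases hlt : j < i
            · -- case 3 ≤ j < i : target E (i-j) - E (i+1-j), positive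
              have hT : (u' * u * vB n)⁻¹ (alphaB n j) = E n (i - j) - E n (i + 1 - j) := by
                apply hinv
                rw [Equiv.Perm.mul_apply, Equiv.Perm.mul_apply, hLv.sub',
                  vB_apply hn (i - j) (by omega) (by omega),
                  vB_apply hn (i + 1 - j) (by omega) (by omega),
                  if_pos (by omega), if_pos (by omega),
                  show i - j + 2 = i + 2 - j by omega,
                  show i + 1 - j + 2 = i + 3 - j by omega,
                  hLu.sub', hu4 (i + 2 - j) (by omega) (by omega),
                  hu4 (i + 3 - j) (by omega) (by omega), hLu'.sub', hLu'.neg', hLu'.neg',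
                  hv3 (i + 2 - j) (by omega) (by omega),
                  hv3 (i + 3 - j) (by omega) (by omega),
                  show i + 3 - (i + 2 - j) = j + 1 by omega,
                  show i + 3 - (i + 3 - j) = j by omega,
                  alphaB_lt (by omega : j < n)]
                abel
              rw [hT]
              exact ⟨fun h => absurd h (by omega), fun _ =>
                isPos_sub (i - j) (i + 1 - j) (by omega) (by omega) (by omega)⟩
            · -- case i < j ≤ n-1 : target E (j-2) - E (j-1), positive
              have hT : (u' * u * vB n)⁻¹ (alphaB n j) = E n (j - 2) - E n (j - 1) := by
                apply hinv
                rw [Equiv.Perm.mul_apply, Equiv.Perm.mul_apply, hLv.sub',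
                  vB_apply hn (j - 2) (by omega) (by omega),
                  vB_apply hn (j - 1) (by omega) (by omega),
                  if_pos (by omega), if_pos (by omega),
                  show j - 2 + 2 = j by omega, show j - 1 + 2 = j + 1 by omega,
                  hLu.sub', hu4 j (by omega) (by omega), hu4 (j + 1) (by omega) (by omega),
                  hLu'.sub', hLu'.neg', hLu'.neg', hv4 j (by omega) (by omega),
                  hv4 (j + 1) (by omega) (by omega), alphaB_lt (by omega : j < n)]
                abel
              rw [hT]
              exact ⟨fun h => absurd h (by omega), fun _ =>
                isPos_sub (j - 2) (j - 1) (by omega) (by omega) (by omega)⟩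
  exact ⟨(master i (by omega) hi2).1 rfl, fun j a b c => (master j a b).2 c⟩
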